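/- arXiv:2006.15400 — 7 statements merged into one kernel-verified Lean document; each statement's English description precedes it below -/
import Mathlib

section
/- Let X ⊆ ℤ, N ∈ ℕ, and suppose Y ⊆ {1,...,N} satisfies Y - Y ⊆ X. If A ⊆ {1,...,N} satisfies (A - A) ∩ X ⊆ {0}, then |A| · |Y| ≤ 2N. -/
/-! Since `A - A` and `Y - Y` meet only in `0`, the sums `a + y` with `(a, y) ∈ A × Y` are pairwise
distinct, and they all lie in `[2, 2N]`. -/

open Finset
open scoped Pointwise

theorem Finset.card_add_eq_mul_of_sub_inter_sub_subset_zero {G : Type*} [AddCommGroup G]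
    [DecidableEq G] {A B : Finset G} (h : (A - A) ∩ (B - B) ⊆ {0}) :
    #(A + B) = #A * #B := by
  refine card_add_iff.2 ?_
  rintro ⟨a, b⟩ ⟨ha, hb⟩ ⟨a', b'⟩ ⟨ha', hb'⟩ hsum
  simp only at hsum ha ha' hb hb' ⊢
  have hdiff : a - a' = b' - b := by rw [sub_eq_sub_iff_add_eq_add, hsum, add_comm]
  have ha_eq : a = a' := sub_eq_zero.1 <| mem_singleton.1 <| h <| mem_inter.2
    ⟨sub_mem_sub ha ha', hdiff ▸ sub_mem_sub hb' hb⟩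
  subst ha_eq
  rw [add_left_cancel hsum]

/-- If `Y ⊆ {1,…,N}` satisfies `Y - Y ⊆ X` and `A ⊆ {1,…,N}` satisfies
`(A - A) ∩ X ⊆ {0}`, then `|A| · |Y| ≤ 2N`. -/
theorem stmt_0 (X : Set ℤ) (N : ℕ) (A Y : Finset ℤ)
    (hA : ∀ a ∈ A, a ∈ Finset.Icc (1 : ℤ) N)
    (hY : ∀ y ∈ Y, y ∈ Finset.Icc (1 : ℤ) N)
    (hYX : ∀ y ∈ Y, ∀ y' ∈ Y, y - y' ∈ X)
    (hAX : ∀ a ∈ A, ∀ a' ∈ A, a - a' ∈ X → a = a') :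
    A.card * Y.card ≤ 2 * N := by
  have hdisjoint : (A - A) ∩ (Y - Y) ⊆ {0} := by
    intro z hz
    obtain ⟨hzA, hzY⟩ := mem_inter.1 hz
    obtain ⟨a, ha, a', ha', rfl⟩ := mem_sub.1 hzA
    obtain ⟨y, hy, y', hy', hyz⟩ := mem_sub.1 hzY
    rw [hAX a ha a' ha' (hyz ▸ hYX y hy y' hy'), sub_self, mem_singleton]
  have hsumset : A + Y ⊆ Icc (1 + 1) ((N : ℤ) + N) :=
    (add_subset_add hA hY).trans (Icc_add_Icc_subset _ _ _ _)
  calc #A * #Y = #(A + Y) := (card_add_eq_mul_of_sub_inter_sub_subset_zero hdisjoint).symm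
    _ ≤ #(Icc (1 + 1) ((N : ℤ) + N)) := card_le_card hsumset
    _ ≤ 2 * N := by rw [Int.card_Icc]; omega
end

section
/- Let q, k be positive integers and let g ∈ ℤ[x₁,...,x_ℓ] be a polynomial of total degree at most k, with coefficients a_i (indexed by multi-indices i). If g(n) ≡ 0 (mod q) for all n ∈ ℤ^ℓ, then q divides k! · gcd of all the coefficients a_i. -/
/-!
Let `Δ^m = Δ₁^{m₁} ⋯ Δₗ^{mₗ}` be the mixed forward difference at the origin. It is an integer
combination of values of `g`, so `q ∣ Δ^m g`. On a monomial, `Δ^m x^v = ∏ Δ^{mₜ} x^{vₜ}(0)`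
vanishes unless `m ≤ v`, equals `m! := ∏ mₜ!` for `v = m`, and is always divisible by `m!`.
Hence `Δ^m g = m! (a_m + ∑_{v > m} e_v a_v)`; multiplying by `k!/m!` (an integer since `|m| ≤ k`)
gives `q ∣ k! a_m` by downward induction on `|m|`.
-/

open Finset MvPolynomial fwdDiff
open scoped Nat

section ForwardDifference

variable {R : Type*} [CommRing R]

theorem fwdDiff_id_mul (f : R → R) :
    Δ_[1] (fun x ↦ x * f x) = (fun y ↦ y * Δ_[1] f y) + fun y ↦ f (y + 1) := by
  funext y
  simp only [fwdDiff, Pi.add_apply]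
  ring

theorem fwdDiff_iter_succ_id_mul (f : R → R) (n : ℕ) (y : R) :
    Δ_[1] ^[n + 1] (fun x ↦ x * f x) y =
      y * Δ_[1] ^[n + 1] f y + (n + 1) * Δ_[1] ^[n] f (y + 1) := by
  induction n generalizing f y with
  | zero => simp [fwdDiff_id_mul]
  | succ n ih =>
    rw [Function.iterate_succ_apply, fwdDiff_id_mul, fwdDiff_iter_add, Pi.add_apply, ih,
      fwdDiff_iter_comp_add, ← Function.iterate_succ_apply, ← Function.iterate_succ_apply]
    push_cast
    ring

theorem factorial_dvd_fwdDiff_iter_pow (v n : ℕ) (y : R) :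
    (n ! : R) ∣ Δ_[1] ^[n] (fun x ↦ x ^ v) y := by
  induction v generalizing n y with
  | zero =>
    rcases n with _ | n
    · simp
    · rw [fwdDiff_iter_pow_eq_zero_of_lt n.succ_pos, Pi.zero_apply]
      exact dvd_zero _
  | succ v ih =>
    rcases n with _ | n
    · simp
    · simp_rw [pow_succ', fwdDiff_iter_succ_id_mul]
      refine dvd_add ((ih _ y).mul_left y) ?_
      rw [Nat.factorial_succ, Nat.cast_mul, Nat.cast_succ]
      exact mul_dvd_mul_left _ (ih n (y + 1))

end ForwardDifference

theorem Finsupp.degree_lt_degree_of_lt {σ : Type*} {m v : σ →₀ ℕ} (h : m < v) :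
    m.degree < v.degree := by
  obtain ⟨d, rfl⟩ := le_iff_exists_add.mp h.le
  have hd : d ≠ 0 := by rintro rfl; simp at h
  rw [map_add, lt_add_iff_pos_right, pos_iff_ne_zero]
  exact mt (Finsupp.degree_eq_zero_iff d).mp hd

namespace MvPolynomial

variable {R : Type*} [CommRing R] {σ : Type*} [Fintype σ] [DecidableEq σ]

/-- The mixed forward difference `Δ₁^{m₁} ⋯ Δₗ^{mₗ} g` at the origin, expanded by
`fwdDiff_iter_eq_sum_shift` in each variable. -/
noncomputable def mixedFwdDiffAtZero (m : σ →₀ ℕ) (g : MvPolynomial σ R) : R :=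
  ∑ j ∈ Fintype.piFinset fun t ↦ range (m t + 1),
    (∏ t, (-1 : R) ^ (m t - j t) * (m t).choose (j t)) * eval (fun t ↦ (j t : R)) g

theorem dvd_mixedFwdDiffAtZero {q : R} {g : MvPolynomial σ R}
    (hg : ∀ n : σ → ℕ, q ∣ eval (fun t ↦ (n t : R)) g) (m : σ →₀ ℕ) :
    q ∣ mixedFwdDiffAtZero m g :=
  dvd_sum fun j _ ↦ (hg j).mul_left _

theorem mixedFwdDiffAtZero_monomial (m v : σ →₀ ℕ) (a : R) :
    mixedFwdDiffAtZero m (monomial v a) = a * ∏ t, Δ_[1] ^[m t] (fun x : R ↦ x ^ v t) 0 := by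
  simp_rw [fwdDiff_iter_eq_sum_shift, prod_univ_sum, mixedFwdDiffAtZero, eval_monomial,
    Finsupp.prod_fintype _ _ (fun _ ↦ pow_zero _), mul_sum]
  refine sum_congr rfl fun j _ ↦ ?_
  simp only [zero_add, nsmul_eq_mul, mul_one, zsmul_eq_mul]
  push_cast
  simp only [prod_mul_distrib]
  ring

theorem mixedFwdDiffAtZero_eq_sum (m : σ →₀ ℕ) (g : MvPolynomial σ R) :
    mixedFwdDiffAtZero m g =
      ∑ v ∈ g.support, g.coeff v * ∏ t, Δ_[1] ^[m t] (fun x : R ↦ x ^ v t) 0 := by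
  conv_lhs => rw [g.as_sum]
  simp_rw [← mixedFwdDiffAtZero_monomial, mixedFwdDiffAtZero, map_sum, mul_sum]
  exact sum_comm

theorem dvd_factorial_mul_coeff_of_dvd_higher {q : R} {g : MvPolynomial σ R} {k : ℕ}
    (hg : ∀ n : σ → ℕ, q ∣ eval (fun t ↦ (n t : R)) g) {m : σ →₀ ℕ} (hm : m ∈ g.support)
    (hmk : m.degree ≤ k) (hhigher : ∀ v ∈ g.support, m < v → q ∣ k ! * g.coeff v) :
    q ∣ k ! * g.coeff m := by
  set c : (σ →₀ ℕ) → R := fun v ↦ ∏ t, Δ_[1] ^[m t] (fun x : R ↦ x ^ v t) 0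
  obtain ⟨K, hK⟩ : ∏ t, (m t)! ∣ k ! :=
    (Nat.prod_factorial_dvd_factorial_sum _ _).trans
      (Nat.factorial_dvd_factorial (m.degree_eq_sum ▸ hmk))
  have hKc : K * c m = k ! := by
    simp only [c, fwdDiff_iter_eq_factorial, Pi.natCast_apply, hK, Nat.cast_mul,
      Nat.cast_prod, mul_comm]
  have hterm : ∀ v ∈ g.support, v ≠ m → q ∣ K * (g.coeff v * c v) := by
    intro v hv hvm
    by_cases hle : m ≤ v
    · obtain ⟨e, he⟩ : ∏ t, ((m t)! : R) ∣ c v :=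
        prod_dvd_prod_of_dvd _ _ fun t _ ↦ factorial_dvd_fwdDiff_iter_pow _ _ _
      have hv' : K * (g.coeff v * c v) = k ! * g.coeff v * e := by
        rw [he, hK]; push_cast; ring
      rw [hv']
      exact (hhigher v hv (lt_of_le_of_ne hle (Ne.symm hvm))).mul_right e
    · obtain ⟨t, ht⟩ : ∃ t, v t < m t := by simpa [Finsupp.le_def] using hle
      have hcv : c v = 0 :=
        prod_eq_zero (mem_univ t) (by rw [fwdDiff_iter_pow_eq_zero_of_lt ht, Pi.zero_apply])
      rw [hcv, mul_zero, mul_zero]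
      exact dvd_zero q
  have hsplit : K * mixedFwdDiffAtZero m g =
      k ! * g.coeff m + ∑ v ∈ g.support.erase m, K * (g.coeff v * c v) := by
    rw [mixedFwdDiffAtZero_eq_sum, ← add_sum_erase _ _ hm, mul_add, mul_sum, ← hKc]
    ring
  have hdiff : q ∣ K * mixedFwdDiffAtZero m g := (dvd_mixedFwdDiffAtZero hg m).mul_left _
  rw [hsplit] at hdiff
  exact (dvd_add_left (dvd_sum fun v hv ↦ hterm v (mem_of_mem_erase hv) (ne_of_mem_erase hv))).mp
    hdiff

theorem dvd_factorial_mul_coeff_of_forall_dvd_eval {q : R} {g : MvPolynomial σ R} {k : ℕ}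
    (hdeg : g.totalDegree ≤ k) (hg : ∀ n : σ → ℕ, q ∣ eval (fun t ↦ (n t : R)) g)
    (m : σ →₀ ℕ) : q ∣ k ! * g.coeff m := by
  induction hN : k - m.degree using Nat.strong_induction_on generalizing m with
  | _ N ih =>
    by_cases hm : m ∈ g.support
    · refine dvd_factorial_mul_coeff_of_dvd_higher hg hm ((le_totalDegree hm).trans hdeg)
        fun v hv hmv ↦ ih _ ?_ v rfl
      have := Finsupp.degree_lt_degree_of_lt hmv
      have : v.degree ≤ k := (le_totalDegree hv).trans hdeg
      omega
    · rw [notMem_support_iff.mp hm, mul_zero]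
      exact dvd_zero q

end MvPolynomial

theorem stmt_1_general (ℓ k q : ℕ)
    (g : MvPolynomial (Fin ℓ) ℤ) (hdeg : g.totalDegree ≤ k)
    (hvan : ∀ n : Fin ℓ → ℤ, (q : ℤ) ∣ eval n g) :
    (q : ℤ) ∣ (k.factorial : ℤ) * g.support.gcd g.coeff := by
  have hgcd : (q : ℤ) ∣ g.support.gcd fun v ↦ (k ! : ℤ) * g.coeff v :=
    dvd_gcd fun v _ ↦ dvd_factorial_mul_coeff_of_forall_dvd_eval hdeg (fun n ↦ hvan _) v
  rwa [Finset.gcd_mul_left, Int.normalize_of_nonneg (by positivity)] at hgcd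

/-- If `g ∈ ℤ[x₁,…,x_ℓ]` of total degree at most `k` vanishes identically
modulo `q`, then `q ∣ k! · gcd(coefficients of g)`. -/
theorem stmt_1 (ℓ k q : ℕ) (hq : 0 < q) (hk : 0 < k)
    (g : MvPolynomial (Fin ℓ) ℤ) (hdeg : g.totalDegree ≤ k)
    (hvan : ∀ n : Fin ℓ → ℤ, (q : ℤ) ∣ eval n g) :
    (q : ℤ) ∣ (k.factorial : ℤ) * g.support.gcd g.coeff :=
  stmt_1_general ℓ k q g hdeg hvan
end

section
/- Let ℓ ∈ ℕ, let h ∈ ℤ[x₁,...,x_ℓ] be an intersective polynomial with a fixed choice of p-adic integer roots {z_p}, and let h_d denote the associated auxiliary polynomials with completely multiplicative scaling function λ. Suppose d, q ∈ ℕ, A ⊆ ℕ satisfies (A − A) ∩ h_d(ℤ^ℓ) ⊆ {0}, and A' ⊆ {a : x + λ(q)·a ∈ A} for some x ∈ ℤ. Then (A' − A') ∩ h_{qd}(ℤ^ℓ) ⊆ {0}. -/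
open MvPolynomial

lemma exists_add_mul_eq_add_mul_mul {ι : Type*} {r r' : ι → ℤ} {d : ℤ}
    (hr : ∀ i, d ∣ r' i - r i) (q : ℤ) (n : ι → ℤ) :
    ∃ m : ι → ℤ, (fun i => r i + d * m i) = fun i => r' i + q * d * n i := by
  choose c hc using hr
  exact ⟨fun i => c i + q * n i, funext fun i => by linear_combination -hc i⟩

/-- The substitution `m = (r_{qd} - r_d)/d + q n` turns `λ(q) h_{qd}(n)` into a value of `h_d`. -/
lemma exists_aux_eq_mul_aux {ℓ : ℕ} (h : MvPolynomial (Fin ℓ) ℤ)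
    (r : ℕ → Fin ℓ → ℤ) (lam : ℕ → ℤ) (hlampos : ∀ n, 0 < lam n)
    (hlam : ∀ m n : ℕ, lam (m * n) = lam m * lam n)
    (haux : ℕ → (Fin ℓ → ℤ) → ℤ)
    (hdef : ∀ d : ℕ, ∀ y : Fin ℓ → ℤ,
      lam d * haux d y = eval (fun i => r d i + (d : ℤ) * y i) h)
    (hr : ∀ q d : ℕ, ∀ i, (d : ℤ) ∣ (r (q * d) i - r d i)) (d q : ℕ) (n : Fin ℓ → ℤ) :
    ∃ m : Fin ℓ → ℤ, haux d m = lam q * haux (q * d) n := by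
  obtain ⟨m, hm⟩ := exists_add_mul_eq_add_mul_mul (hr q d) q n
  refine ⟨m, mul_left_cancel₀ (hlampos d).ne' ?_⟩
  rw [hdef, hm, ← mul_assoc, mul_comm (lam d), ← hlam, hdef]
  push_cast
  rfl

theorem stmt_6_general (ℓ : ℕ) (h : MvPolynomial (Fin ℓ) ℤ)
    (r : ℕ → Fin ℓ → ℤ) (lam : ℕ → ℤ) (hlampos : ∀ n, 0 < lam n)
    (hlam : ∀ m n : ℕ, lam (m * n) = lam m * lam n)
    (haux : ℕ → (Fin ℓ → ℤ) → ℤ)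
    (hdef : ∀ d : ℕ, ∀ y : Fin ℓ → ℤ,
      lam d * haux d y = eval (fun i => r d i + (d : ℤ) * y i) h)
    (hr : ∀ q d : ℕ, ∀ i, (d : ℤ) ∣ (r (q * d) i - r d i))
    (d q : ℕ) (A A' : Set ℤ) (x : ℤ)
    (hA : ∀ a ∈ A, ∀ a' ∈ A, ∀ n : Fin ℓ → ℤ, a - a' = haux d n → a = a')
    (hA' : A' ⊆ {a : ℤ | x + lam q * a ∈ A}) :
    ∀ a ∈ A', ∀ a' ∈ A', ∀ n : Fin ℓ → ℤ, a - a' = haux (q * d) n → a = a' := by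
  intro a ha a' ha' n hdiff
  obtain ⟨m, hm⟩ := exists_aux_eq_mul_aux h r lam hlampos hlam haux hdef hr d q n
  have hlift : x + lam q * a = x + lam q * a' :=
    hA _ (hA' ha) _ (hA' ha') m (by rw [hm, ← hdiff]; ring)
  exact mul_left_cancel₀ (hlampos q).ne' (add_left_cancel hlift)

/-- Inheritance: for an intersective polynomial `h` with chosen `p`-adic roots,
associated shifts `r_d`, completely multiplicative scaling `λ`, and auxiliary
polynomials `h_d(x) = h(r_d + d·x)/λ(d)`, if `(A − A) ∩ h_d(ℤ^ℓ) ⊆ {0}` and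
`A' ⊆ {a : x + λ(q)·a ∈ A}`, then `(A' − A') ∩ h_{qd}(ℤ^ℓ) ⊆ {0}`. -/
theorem stmt_6 (ℓ : ℕ) (h : MvPolynomial (Fin ℓ) ℤ) (hh : h ≠ 0)
    (r : ℕ → Fin ℓ → ℤ) (lam : ℕ → ℤ) (hlampos : ∀ n, 0 < lam n)
    (hlam : ∀ m n : ℕ, lam (m * n) = lam m * lam n)
    (haux : ℕ → (Fin ℓ → ℤ) → ℤ)
    (hdef : ∀ d : ℕ, ∀ y : Fin ℓ → ℤ,
      lam d * haux d y = eval (fun i => r d i + (d : ℤ) * y i) h)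
    (hr : ∀ q d : ℕ, ∀ i, (d : ℤ) ∣ (r (q * d) i - r d i))
    (d q : ℕ) (A A' : Set ℤ) (hAnat : ∀ a ∈ A, 0 ≤ a) (x : ℤ)
    (hA : ∀ a ∈ A, ∀ a' ∈ A, ∀ n : Fin ℓ → ℤ, a - a' = haux d n → a = a')
    (hA' : A' ⊆ {a : ℤ | x + lam q * a ∈ A}) :
    ∀ a ∈ A', ∀ a' ∈ A', ∀ n : Fin ℓ → ℤ, a - a' = haux (q * d) n → a = a' :=
  stmt_6_general ℓ h r lam hlampos hlam haux hdef hr d q A A' x hA hA'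
end

section
/- Let ℓ ≥ 2 and let h ∈ ℤ[x₁,...,x_ℓ] with h(0) = 0. Suppose the highest degree homogeneous part h^k and the lowest degree nonzero homogeneous part h^j of h are both smooth (over the algebraic closure of ℚ). Then, choosing z_p = 0 for all primes p, there is a finite set of primes X such that for all primes p ∉ X and all d ∈ ℕ, the reduction of the auxiliary polynomial h_d(x) = h(d·x)/d^j modulo p is Deligne. -/
open MvPolynomial

/-- A homogeneous polynomial (or any polynomial, applied to a homogeneous part) over a
field `F` is smooth if the system `g = ∂g/∂x₁ = ⋯ = ∂g/∂x_ℓ = 0` has no nonzero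
solution over the algebraic closure of `F`. -/
def IsSmoothPoly {F : Type*} [Field F] {ℓ : ℕ} (g : MvPolynomial (Fin ℓ) F) : Prop :=
  ∀ x : Fin ℓ → AlgebraicClosure F,
    eval x (map (algebraMap F (AlgebraicClosure F)) g) = 0 →
    (∀ i, eval x (map (algebraMap F (AlgebraicClosure F)) (pderiv i g)) = 0) →
    x = 0

/-- A polynomial `h` of degree `k` over a field `F` is Deligne if `char F` does not
divide `k` and the degree-`k` homogeneous part of `h` is smooth. -/
def IsDelignePoly {F : Type*} [Field F] {ℓ : ℕ} (h : MvPolynomial (Fin ℓ) F) : Prop :=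
  ¬ (ringChar F ∣ h.totalDegree) ∧ IsSmoothPoly (homogeneousComponent h.totalDegree h)


/-!
Comparing homogeneous components in `d^j h_d(x) = h(d x)` gives `h_dⁿ = d^(n-j) hⁿ`. Hence
modulo a prime `p` the top nonzero component of `h_d` is `h^j` if `p ∣ d` and a unit multiple of
`h^k` otherwise, so it suffices that `p ∤ jk` and that `h^j`, `h^k` stay smooth modulo `p`.
Smoothness spreads out: by the Nullstellensatz over `ℚ̄` and clearing denominators, smoothness of
`g` over `ℚ` yields identities `D xᵢ^N = ∑ aₜ fₜ` over `ℤ`, with `D ≠ 0` and `fₜ` ranging over `g`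
and its partial derivatives, and these force `xᵢ = 0` at every singular point of `g` over `𝔽̄_p`
once `p ∤ D`.
-/

namespace MvPolynomial

variable {σ R : Type*}

section Scaling

variable [CommSemiring R]

lemma coeff_bind₁_C_mul_X (c : R) (q : MvPolynomial σ R) (m : σ →₀ ℕ) :
    coeff m (bind₁ (fun i => C c * X i) q) = c ^ m.degree * coeff m q := by
  classical
  induction q using MvPolynomial.induction_on' with
  | monomial m' a =>
    have : bind₁ (fun i => C c * X i) (monomial m' a) = monomial m' (c ^ m'.degree * a) := by
      rw [bind₁_monomial]
      simp only [mul_pow, Finset.prod_mul_distrib, ← C_pow, ← map_prod, Finset.prod_pow_eq_pow_sum]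
      rw [monomial_eq, Finsupp.prod, Finsupp.degree_apply, C_mul]
      ring
    rw [this, coeff_monomial, coeff_monomial]
    split_ifs with hm
    · rw [hm]
    · rw [mul_zero]
  | add p q hp hq => rw [map_add, coeff_add, hp, hq, coeff_add, mul_add]

lemma homogeneousComponent_bind₁_C_mul_X (c : R) (q : MvPolynomial σ R) (n : ℕ) :
    homogeneousComponent n (bind₁ (fun i => C c * X i) q) =
      C (c ^ n) * homogeneousComponent n q := by
  ext m
  rw [coeff_homogeneousComponent, coeff_C_mul, coeff_homogeneousComponent]
  split_ifs with hm
  · rw [coeff_bind₁_C_mul_X, hm]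
  · rw [mul_zero]

end Scaling

lemma homogeneousComponent_map {S : Type*} [CommSemiring R] [CommSemiring S] (φ : R →+* S)
    (q : MvPolynomial σ R) (n : ℕ) :
    homogeneousComponent n (map φ q) = map φ (homogeneousComponent n q) := by
  ext m
  simp only [coeff_homogeneousComponent, coeff_map]
  split_ifs <;> simp

lemma homogeneousComponent_eq_of_eval_mul [CommRing R] [IsDomain R] [Infinite R] {c : R}
    (hc : c ≠ 0) {j : ℕ} {p q : MvPolynomial σ R} (hlow : ∀ i < j, homogeneousComponent i p = 0)
    (heval : ∀ y, c ^ j * eval y q = eval (fun i => c * y i) p) (n : ℕ) :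
    homogeneousComponent n q = C (c ^ (n - j)) * homogeneousComponent n p := by
  have hbind : C (c ^ j) * q = bind₁ (fun i => C c * X i) p := by
    refine MvPolynomial.funext fun y => ?_
    rw [eval_mul, eval_C, heval y, eq_comm, eval, eval₂Hom_bind₁]
    simp only [map_mul, eval₂Hom_C, eval₂Hom_X', RingHom.id_apply]
    rfl
  have hn := congrArg (homogeneousComponent n) hbind
  rw [homogeneousComponent_C_mul, homogeneousComponent_bind₁_C_mul_X] at hn
  refine mul_left_cancel₀ (C_ne_zero.mpr (pow_ne_zero j hc)) (hn.trans ?_)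
  rcases lt_or_ge n j with hnj | hjn
  · simp [hlow n hnj]
  · rw [← mul_assoc, ← C_mul, ← pow_add, Nat.add_sub_cancel' hjn]

lemma totalDegree_eq_of_homogeneousComponent [CommSemiring R] {q : MvPolynomial σ R} {n : ℕ}
    (hn : homogeneousComponent n q ≠ 0) (hgt : ∀ m, n < m → homogeneousComponent m q = 0) :
    q.totalDegree = n := by
  refine le_antisymm (Finset.sup_le fun m hm => ?_) ?_
  · by_contra! hlt
    have := congrArg (coeff m) (hgt _ hlt)
    simp only [coeff_homogeneousComponent, coeff_zero, ite_eq_right_iff] at this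
    exact mem_support_iff.mp hm (this rfl)
  · by_contra! hlt
    exact hn (homogeneousComponent_eq_zero n q hlt)


lemma exists_C_mul_mem_of_map_mem [CommRing R] {S : Type*} [CommRing S] [Algebra R S]
    (M : Submonoid R) [IsLocalization M S] {J : Ideal (MvPolynomial σ R)} {q : MvPolynomial σ R}
    (hq : map (algebraMap R S) q ∈ J.map (map (algebraMap R S))) : ∃ m ∈ M, C m * q ∈ J := by
  let := algebraMvPolynomial (σ := σ) (R := R) (S := S)
  obtain ⟨_, ⟨m, hm, rfl⟩, hmem⟩ :=
    (IsLocalization.mk'_mem_map_algebraMap_iff (M.map C) (MvPolynomial σ S) J q 1).mp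
      (by rwa [IsLocalization.mk'_one])
  exact ⟨m, hm, hmem⟩

lemma eq_zero_of_C_mul_X_pow_mem_span [CommRing R] {K : Type*} [CommRing K] [IsDomain K]
    {φ : R →+* K} {S : Set (MvPolynomial σ R)} {x : σ → K} (hx : ∀ f ∈ S, eval₂ φ x f = 0)
    {D : R} (hD : φ D ≠ 0) {i : σ} {N : ℕ} (hmem : C D * X i ^ N ∈ Ideal.span S) : x i = 0 := by
  have hker : Ideal.span S ≤ RingHom.ker (eval₂Hom φ x) :=
    Ideal.span_le.mpr fun f hf => RingHom.mem_ker.mpr (hx f hf)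
  have := RingHom.mem_ker.mp (hker hmem)
  rw [map_mul, map_pow, eval₂Hom_C, eval₂Hom_X'] at this
  exact IsNilpotent.eq_zero ⟨N, (mul_eq_zero.mp this).resolve_left hD⟩

lemma exists_C_mul_X_pow_mem_span [Finite σ] {S : Set (MvPolynomial σ ℤ)}
    (hS : ∀ x : σ → AlgebraicClosure ℚ, (∀ f ∈ S, eval₂ (Int.castRingHom _) x f = 0) → x = 0)
    (i : σ) : ∃ D : ℤ, D ≠ 0 ∧ ∃ N : ℕ, C D * X i ^ N ∈ Ideal.span S := by
  set I := (Ideal.span S).map (map (algebraMap ℤ ℚ))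
  have hzero : ∀ x ∈ zeroLocus (AlgebraicClosure ℚ) I, x = 0 := fun x hx =>
    hS x fun f hf => by
      have := hx _ (Ideal.mem_map_of_mem _ (Ideal.subset_span hf))
      rwa [aeval_def, eval₂_map, RingHom.eq_intCast' (RingHom.comp _ _)] at this
  have hrad : X i ∈ I.radical := by
    rw [← vanishingIdeal_zeroLocus_eq_radical (K := AlgebraicClosure ℚ), mem_vanishingIdeal_iff]
    intro x hx
    rw [aeval_X, hzero x hx, Pi.zero_apply]
  obtain ⟨N, hN⟩ := hrad
  rw [← map_X (algebraMap ℤ ℚ), ← map_pow] at hN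
  obtain ⟨D, hD, hmem⟩ := exists_C_mul_mem_of_map_mem (nonZeroDivisors ℤ) hN
  exact ⟨D, nonZeroDivisors.ne_zero hD, N, hmem⟩

end MvPolynomial

def singularEquations {σ R : Type*} [CommSemiring R] (g : MvPolynomial σ R) :
    Set (MvPolynomial σ R) :=
  insert g (Set.range fun i => pderiv i g)

variable {ℓ : ℕ}

lemma isSmoothPoly_map_int_iff {F : Type*} [Field F] (g : MvPolynomial (Fin ℓ) ℤ) :
    IsSmoothPoly (map (Int.castRingHom F) g) ↔ ∀ x : Fin ℓ → AlgebraicClosure F,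
      (∀ f ∈ singularEquations g, eval₂ (Int.castRingHom _) x f = 0) → x = 0 := by
  have hcast (f : MvPolynomial (Fin ℓ) ℤ) (x : Fin ℓ → AlgebraicClosure F) :
      eval x (map (algebraMap F _) (map (Int.castRingHom F) f)) =
        eval₂ (Int.castRingHom _) x f := by
    rw [map_map, eval_map, RingHom.eq_intCast' (RingHom.comp _ _)]
  simp only [IsSmoothPoly, singularEquations, Set.forall_mem_insert, Set.forall_mem_range,
    pderiv_map, hcast, and_imp]

lemma exists_isSmoothPoly_map_zmod {g : MvPolynomial (Fin ℓ) ℤ}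
    (hg : IsSmoothPoly (map (Int.castRingHom ℚ) g)) :
    ∃ c : ℤ, c ≠ 0 ∧ ∀ (p : ℕ) [Fact p.Prime], ¬ (p : ℤ) ∣ c →
      IsSmoothPoly (map (Int.castRingHom (ZMod p)) g) := by
  rw [isSmoothPoly_map_int_iff] at hg
  choose D hD N hN using exists_C_mul_X_pow_mem_span hg
  refine ⟨∏ i, D i, Finset.prod_ne_zero_iff.mpr fun i _ => hD i, fun p _ hp => ?_⟩
  rw [isSmoothPoly_map_int_iff]
  refine fun x hx => funext fun i => eq_zero_of_C_mul_X_pow_mem_span hx ?_ (hN i)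
  rw [eq_intCast, Ne, CharP.intCast_eq_zero_iff _ p]
  exact fun hpD => hp (hpD.trans (Finset.dvd_prod_of_mem D (Finset.mem_univ i)))

lemma IsSmoothPoly.ne_zero {F : Type*} [Field F] [NeZero ℓ] {g : MvPolynomial (Fin ℓ) F}
    (hg : IsSmoothPoly g) : g ≠ 0 := by
  rintro rfl
  exact one_ne_zero (hg 1 (by simp) (by simp))

lemma IsSmoothPoly.C_mul {F : Type*} [Field F] {g : MvPolynomial (Fin ℓ) F} (hg : IsSmoothPoly g)
    {u : F} (hu : u ≠ 0) : IsSmoothPoly (C u * g) := by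
  have hu' : algebraMap F (AlgebraicClosure F) u ≠ 0 := (map_ne_zero _).mpr hu
  intro x h0 h1
  refine hg x ?_ fun i => ?_
  · simpa [hu'] using h0
  · simpa [pderiv_C_mul, hu'] using h1 i

lemma isDelignePoly_of_homogeneousComponent {F : Type*} [Field F] [NeZero ℓ]
    {q : MvPolynomial (Fin ℓ) F} {n : ℕ} (hchar : ¬ ringChar F ∣ n)
    (hsmooth : IsSmoothPoly (homogeneousComponent n q))
    (hgt : ∀ m, n < m → homogeneousComponent m q = 0) : IsDelignePoly q := by
  rw [IsDelignePoly, totalDegree_eq_of_homogeneousComponent hsmooth.ne_zero hgt]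
  exact ⟨hchar, hsmooth⟩

theorem stmt_7_general (ℓ : ℕ) (hℓ : 2 ≤ ℓ) (h : MvPolynomial (Fin ℓ) ℤ)
    (hconst : constantCoeff h = 0)
    (k j : ℕ) (hk : k = h.totalDegree)
    (hjne : homogeneousComponent j h ≠ 0)
    (hjmin : ∀ i < j, homogeneousComponent i h = 0)
    (hksmooth : IsSmoothPoly (map (Int.castRingHom ℚ) (homogeneousComponent k h)))
    (hjsmooth : IsSmoothPoly (map (Int.castRingHom ℚ) (homogeneousComponent j h))) :
    ∃ XS : Finset ℕ, ∀ (p : ℕ) [Fact p.Prime], p ∉ XS →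
      ∀ d : ℕ, 0 < d → ∀ hd : MvPolynomial (Fin ℓ) ℤ,
        (∀ y : Fin ℓ → ℤ, (d : ℤ) ^ j * eval y hd = eval (fun i => (d : ℤ) * y i) h) →
        IsDelignePoly (map (Int.castRingHom (ZMod p)) hd) := by
  have : NeZero ℓ := ⟨by omega⟩
  have hj0 : j ≠ 0 := by
    rintro rfl
    rw [homogeneousComponent_zero, ← constantCoeff_eq, hconst, C_0] at hjne
    exact hjne rfl
  have hjk : j ≤ k := hk ▸ not_lt.mp (mt (homogeneousComponent_eq_zero j h) hjne)
  obtain ⟨ck, hck0, hck⟩ := exists_isSmoothPoly_map_zmod hksmooth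
  obtain ⟨cj, hcj0, hcj⟩ := exists_isSmoothPoly_map_zmod hjsmooth
  have hc : (j * k * ck * cj : ℤ) ≠ 0 := by simp [hj0, hck0, hcj0]; omega
  refine ⟨(j * k * ck * cj).natAbs.primeFactors, fun p hp hpX d hd0 hd hdh => ?_⟩
  have hpc : ¬ (p : ℤ) ∣ j * k * ck * cj := fun hdvd =>
    hpX (Nat.mem_primeFactors.mpr ⟨hp.out, Int.natCast_dvd.mp hdvd, Int.natAbs_ne_zero.mpr hc⟩)
  simp only [(Nat.prime_iff_prime_int.mp hp.out).dvd_mul, not_or, Int.natCast_dvd_natCast] at hpc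
  obtain ⟨⟨⟨hpj, hpk⟩, hpck⟩, hpcj⟩ := hpc
  have hcomp (n : ℕ) : homogeneousComponent n (map (Int.castRingHom (ZMod p)) hd) =
      C ((d : ZMod p) ^ (n - j)) * map (Int.castRingHom (ZMod p)) (homogeneousComponent n h) := by
    rw [homogeneousComponent_map,
      homogeneousComponent_eq_of_eval_mul (by exact_mod_cast hd0.ne') hjmin hdh n]
    simp
  by_cases hpd : (d : ZMod p) = 0
  · refine isDelignePoly_of_homogeneousComponent (n := j) ?_ ?_ fun m hm => ?_
    · rwa [ZMod.ringChar_zmod_n]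
    · rw [hcomp, Nat.sub_self, pow_zero, C_1, one_mul]
      exact hcj p hpcj
    · rw [hcomp, hpd, zero_pow (by omega), C_0, zero_mul]
  · refine isDelignePoly_of_homogeneousComponent (n := k) ?_ ?_ fun m hm => ?_
    · rwa [ZMod.ringChar_zmod_n]
    · rw [hcomp]
      exact (hck p hpck).C_mul (pow_ne_zero _ hpd)
    · rw [hcomp, homogeneousComponent_eq_zero m h (hk ▸ hm), map_zero, mul_zero]

/-- If `h ∈ ℤ[x₁,…,x_ℓ]` has `h(0) = 0` and its highest and lowest degree homogeneous
parts are smooth over `ℚ̄`, then (choosing `z_p = 0` for all `p`) there is a finite set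
of primes `X` so that for all primes `p ∉ X` and all `d ≥ 1`, the auxiliary polynomial
`h_d(x) = h(d·x)/d^j` is Deligne modulo `p`. -/
theorem stmt_7 (ℓ : ℕ) (hℓ : 2 ≤ ℓ) (h : MvPolynomial (Fin ℓ) ℤ) (h0 : h ≠ 0)
    (hconst : constantCoeff h = 0)
    (k j : ℕ) (hk : k = h.totalDegree)
    (hjne : homogeneousComponent j h ≠ 0)
    (hjmin : ∀ i < j, homogeneousComponent i h = 0)
    (hksmooth : IsSmoothPoly (map (Int.castRingHom ℚ) (homogeneousComponent k h)))
    (hjsmooth : IsSmoothPoly (map (Int.castRingHom ℚ) (homogeneousComponent j h))) :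
    ∃ XS : Finset ℕ, ∀ (p : ℕ) [Fact p.Prime], p ∉ XS →
      ∀ d : ℕ, 0 < d → ∀ hd : MvPolynomial (Fin ℓ) ℤ,
        (∀ y : Fin ℓ → ℤ, (d : ℤ) ^ j * eval y hd = eval (fun i => (d : ℤ) * y i) h) →
        IsDelignePoly (map (Int.castRingHom (ZMod p)) hd) :=
  stmt_7_general ℓ hℓ h hconst k j hk hjne hjmin hksmooth hjsmooth
end

section
/- Let A ⊆ {1,...,N}, let h : ℤ^ℓ → ℤ satisfy h(H) ⊆ [−N/9, N/9] \ {0} for a finite set H ⊆ ℤ^ℓ, let δ = |A|/N, and define the balanced function f_A = 1_A − δ·1_{[1,N]}. If (A − A) ∩ h(H) = ∅ and |A ∩ (N/9, 8N/9)| ≥ 3δN/4, then Σ_{x ∈ ℤ} Σ_{n ∈ H} f_A(x) f_A(x + h(n)) ≤ −δ²N|H|/4. -/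
open Finset

/-!
Fix a shift `c = h(n)` and expand `f_A(x) f_A(x + c)` over `x ∈ [1, N]`. The term
`1_A(x) 1_A(x + c)` vanishes because `c ∉ A - A`. Since `|c| ≤ N/9`, every `a ∈ A ∩ (N/9, 8N/9)`
contributes to both cross terms, once as `x = a` and once as `x = a - c`, so each is at least
`δ |A ∩ (N/9, 8N/9)| ≥ 3δ²N/4`, while the last term is at most `δ²N`. Hence each shift contributes
at most `-δ²N/2`.
-/

/-- `f_A` of the paper. -/
noncomputable def balancedIndicator (A : Finset ℤ) (N : ℕ) (δ : ℝ) (x : ℤ) : ℝ :=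
  (if x ∈ A then 1 else 0) - δ * (if x ∈ Icc (1 : ℤ) N then 1 else 0)

noncomputable def midrange (A : Finset ℤ) (N : ℕ) : Finset ℤ :=
  A.filter fun a : ℤ => (N : ℝ) / 9 < (a : ℝ) ∧ (a : ℝ) < 8 * N / 9

section

variable {A : Finset ℤ} {N : ℕ} {a c : ℤ}

lemma add_mem_Icc_of_mem_midrange (ha : a ∈ midrange A N) (hc : |(c : ℝ)| ≤ N / 9) :
    a + c ∈ Icc (1 : ℤ) N := by
  obtain ⟨hlo, hhi⟩ := (mem_filter.mp ha).2
  obtain ⟨hc₁, hc₂⟩ := abs_le.mp hc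
  have h₁ : (0 : ℝ) < a + c := by linarith
  have h₂ : (a : ℝ) + c < N := by linarith
  rw [mem_Icc]
  constructor
  · exact_mod_cast h₁
  · exact_mod_cast h₂.le

lemma card_midrange_le_card_filter_add_mem_Icc (hc : |(c : ℝ)| ≤ N / 9) :
    #(midrange A N) ≤ #(A.filter fun x => x + c ∈ Icc (1 : ℤ) N) :=
  card_le_card fun _ ha =>
    mem_filter.mpr ⟨(mem_filter.mp ha).1, add_mem_Icc_of_mem_midrange ha hc⟩

lemma card_midrange_le_card_filter_add_mem (hc : |(c : ℝ)| ≤ N / 9) :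
    #(midrange A N) ≤ #((Icc (1 : ℤ) N).filter fun x => x + c ∈ A) := by
  refine card_le_card_of_injOn (· - c) (fun a ha => ?_) sub_left_injective.injOn
  have hneg : |((-c : ℤ) : ℝ)| ≤ N / 9 := by rwa [Int.cast_neg, abs_neg]
  refine mem_filter.mpr ⟨?_, ?_⟩
  · simpa [sub_eq_add_neg] using add_mem_Icc_of_mem_midrange ha hneg
  · simpa using (mem_filter.mp ha).1

lemma sum_balancedIndicator_mul_shift_le {δ : ℝ} (hA : ∀ a ∈ A, a ∈ Icc (1 : ℤ) N)
    (hδ : 0 ≤ δ) (hc : |(c : ℝ)| ≤ N / 9) (hshift : ∀ a ∈ A, a + c ∉ A) :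
    ∑ x ∈ Icc (1 : ℤ) N, balancedIndicator A N δ x * balancedIndicator A N δ (x + c)
      ≤ δ ^ 2 * N - 2 * δ * #(midrange A N) := by
  set I := Icc (1 : ℤ) N with hI
  have hexpand : ∀ x ∈ I, balancedIndicator A N δ x * balancedIndicator A N δ (x + c) =
      (if x ∈ A ∧ x + c ∈ A then 1 else 0) - δ * (if x ∈ A ∧ x + c ∈ I then 1 else 0)
        - δ * (if x + c ∈ A then 1 else 0) + δ ^ 2 * (if x + c ∈ I then 1 else 0) := by
    intro x hx
    simp only [balancedIndicator, ← hI, if_pos hx, ite_and]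
    split_ifs <;> ring
  have hcollision : I.filter (fun x => x ∈ A ∧ x + c ∈ A) = ∅ :=
    filter_eq_empty_iff.mpr fun x _ hx => hshift x hx.1 hx.2
  have hcross : I.filter (fun x => x ∈ A ∧ x + c ∈ I) = A.filter fun x => x + c ∈ I := by
    ext x
    simp only [mem_filter]
    exact ⟨fun h => h.2, fun h => ⟨hA x h.1, h⟩⟩
  have hcross₁ : (#(midrange A N) : ℝ) ≤ #(A.filter fun x => x + c ∈ I) := by
    exact_mod_cast card_midrange_le_card_filter_add_mem_Icc hc
  have hcross₂ : (#(midrange A N) : ℝ) ≤ #(I.filter fun x => x + c ∈ A) := by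
    exact_mod_cast card_midrange_le_card_filter_add_mem hc
  have hlast : (#(I.filter fun x => x + c ∈ I) : ℝ) ≤ N := by
    have : #(I.filter fun x => x + c ∈ I) ≤ N := (card_filter_le _ _).trans (by simp [I])
    exact_mod_cast this
  rw [sum_congr rfl hexpand]
  simp only [sum_add_distrib, sum_sub_distrib, ← mul_sum, sum_boole, hcollision, hcross,
    card_empty, Nat.cast_zero]
  nlinarith [mul_le_mul_of_nonneg_left hcross₁ hδ, mul_le_mul_of_nonneg_left hcross₂ hδ,
    mul_le_mul_of_nonneg_left hlast (sq_nonneg δ)]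

end

theorem stmt_15_general (N : ℕ) (ℓ : ℕ) (A : Finset ℤ)
    (hA : ∀ a ∈ A, a ∈ Finset.Icc (1 : ℤ) N)
    (δ : ℝ) (hδ : δ = A.card / N)
    (h : (Fin ℓ → ℤ) → ℤ) (H : Finset (Fin ℓ → ℤ))
    (hH : ∀ n ∈ H, h n ≠ 0 ∧ |(h n : ℝ)| ≤ N / 9)
    (f : ℤ → ℝ)
    (hf : ∀ x : ℤ, f x = (if x ∈ A then (1 : ℝ) else 0)
      - δ * (if x ∈ Finset.Icc (1 : ℤ) N then (1 : ℝ) else 0))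
    (hdiff : ∀ a ∈ A, ∀ a' ∈ A, ∀ n ∈ H, a - a' ≠ h n)
    (hmid : ((A.filter (fun a : ℤ => (N : ℝ) / 9 < (a : ℝ) ∧ (a : ℝ) < 8 * N / 9)).card : ℝ)
      ≥ 3 * δ * N / 4) :
    ∑ x ∈ Finset.Icc (1 : ℤ) N, ∑ n ∈ H, f x * f (x + h n)
      ≤ - (δ ^ 2 * N * H.card / 4) := by
  obtain rfl : f = balancedIndicator A N δ := funext hf
  have hδ₀ : 0 ≤ δ := hδ ▸ by positivity
  have hshift : ∀ n ∈ H, ∑ x ∈ Icc (1 : ℤ) N,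
      balancedIndicator A N δ x * balancedIndicator A N δ (x + h n) ≤ -(δ ^ 2 * N / 2) := by
    intro n hn
    have hmid' : 3 * δ * N / 4 ≤ #(midrange A N) := hmid
    refine (sum_balancedIndicator_mul_shift_le hA hδ₀ (hH n hn).2
      fun a ha ha' => hdiff _ ha' _ ha n hn (add_sub_cancel_left a (h n))).trans ?_
    nlinarith [mul_le_mul_of_nonneg_left hmid' hδ₀]
  rw [sum_comm]
  calc _ ≤ ∑ _n ∈ H, -(δ ^ 2 * N / 2) := sum_le_sum hshift
    _ = -(δ ^ 2 * N * H.card / 2) := by rw [sum_const, nsmul_eq_mul]; ring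
    _ ≤ -(δ ^ 2 * N * H.card / 4) := by
      have : 0 ≤ δ ^ 2 * N * H.card := by positivity
      linarith

/-- If `A ⊆ {1,…,N}` has density `δ`, `h(H) ⊆ [−N/9, N/9] \ {0}`,
`(A − A) ∩ h(H) = ∅`, and `|A ∩ (N/9, 8N/9)| ≥ 3δN/4`, then
`Σ_x Σ_{n ∈ H} f_A(x) f_A(x + h(n)) ≤ −δ²N|H|/4` for the balanced function
`f_A = 1_A − δ·1_{[1,N]}` (the sum over `x` is supported in `[1,N]`). -/
theorem stmt_15 (N : ℕ) (hN : 0 < N) (ℓ : ℕ) (A : Finset ℤ)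
    (hA : ∀ a ∈ A, a ∈ Finset.Icc (1 : ℤ) N)
    (δ : ℝ) (hδ : δ = A.card / N)
    (h : (Fin ℓ → ℤ) → ℤ) (H : Finset (Fin ℓ → ℤ))
    (hH : ∀ n ∈ H, h n ≠ 0 ∧ |(h n : ℝ)| ≤ N / 9)
    (f : ℤ → ℝ)
    (hf : ∀ x : ℤ, f x = (if x ∈ A then (1 : ℝ) else 0)
      - δ * (if x ∈ Finset.Icc (1 : ℤ) N then (1 : ℝ) else 0))
    (hdiff : ∀ a ∈ A, ∀ a' ∈ A, ∀ n ∈ H, a - a' ≠ h n)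
    (hmid : ((A.filter (fun a : ℤ => (N : ℝ) / 9 < (a : ℝ) ∧ (a : ℝ) < 8 * N / 9)).card : ℝ)
      ≥ 3 * δ * N / 4) :
    ∑ x ∈ Finset.Icc (1 : ℤ) N, ∑ n ∈ H, f x * f (x + h n)
      ≤ - (δ ^ 2 * N * H.card / 4) :=
  stmt_15_general N ℓ A hA δ hδ h H hH f hf hdiff hmid
end

section
/- Let b : ℕ → [0,∞) be a multiplicative function with b(p^v) ≤ B for all prime powers p^v, where B = (k−1)²·2^C for constants k ≥ 2 and C > 0 such that b(p) ≤ (k−1)²(1 + 1/(p−1))^C for all primes p. Then Σ_{q=1}^{Q} b(q)/q ≪_{k,C} (log Q)^{(k−1)²}. -/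
/-!
Put `a = (k - 1)²` and `ε_p = (1 + 1/(p - 1))^C - 1`, so that `b(p^v) ≤ a + a ε_p`. Since
`(f * g)(n) ≥ f(n) + g(n)` for nonnegative `f, g` with `f(1) = g(1) = 1`, and `ζ^a(p^v) ≥ a`,
the function `b` is dominated by the multiplicative function `h * ζ^a` with
`h(n) = ∏_{p ∣ n} a ε_p`. The map `f ↦ (n ↦ f(n)/n)` respects Dirichlet convolution, whose
partial sums are submultiplicative for nonnegative functions; hence
`Σ_{q ≤ Q} b(q)/q ≤ (Σ_{n ≤ Q} h(n)/n) · H_Q^a`. The Euler product bounds the first factor by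
`exp (Σ_p a ε_p / (p - 1))`, which is bounded because `ε_p ≤ (e^C - 1)/(p - 1)`, and
`H_Q ≤ 3 log Q`. Comparing with `ζ^a` instead of `∏_p (1 - 1/p)^{-a}` avoids Mertens' theorem.
-/

open Finset ArithmeticFunction
open scoped ArithmeticFunction.zeta

namespace ArithmeticFunction

section OrderedSemiring

variable {R : Type*} [CommSemiring R] [PartialOrder R] [IsOrderedRing R]
  {f g : ArithmeticFunction R}

theorem natCoe_zeta_apply_nonneg (n : ℕ) : 0 ≤ (ζ : ArithmeticFunction R) n := by
  rw [natCoe_apply]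
  exact Nat.cast_nonneg _

theorem mul_apply_nonneg (hf : ∀ n, 0 ≤ f n) (hg : ∀ n, 0 ≤ g n) (n : ℕ) : 0 ≤ (f * g) n := by
  rw [mul_apply]
  exact sum_nonneg fun x _ ↦ mul_nonneg (hf _) (hg _)

theorem pow_apply_nonneg (hf : ∀ n, 0 ≤ f n) (a n : ℕ) : 0 ≤ (f ^ a) n := by
  induction a generalizing n with
  | zero => rw [pow_zero, one_apply]; split_ifs <;> simp
  | succ a ih => rw [pow_succ]; exact mul_apply_nonneg ih hf n

theorem add_le_mul_apply (hf : ∀ n, 0 ≤ f n) (hg : ∀ n, 0 ≤ g n) (hf₁ : f 1 = 1) (hg₁ : g 1 = 1)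
    {n : ℕ} (hn : n ≠ 1) : f n + g n ≤ (f * g) n := by
  rcases eq_or_ne n 0 with rfl | hn₀
  · simp
  have h := add_le_sum (f := fun x : ℕ × ℕ ↦ f x.1 * g x.2) (i := (n, 1)) (j := (1, n))
    (fun x _ ↦ mul_nonneg (hf x.1) (hg x.2))
    (Nat.mem_divisorsAntidiagonal.2 ⟨mul_one n, hn₀⟩)
    (Nat.mem_divisorsAntidiagonal.2 ⟨one_mul n, hn₀⟩) (by simp [hn])
  simpa [hf₁, hg₁, mul_apply] using h

theorem natCast_le_zeta_pow_apply (a : ℕ) {n : ℕ} (hn : 1 < n) :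
    (a : R) ≤ ((ζ : ArithmeticFunction R) ^ a) n := by
  induction a with
  | zero => simp [hn.ne']
  | succ a ih =>
    calc ((a + 1 : ℕ) : R) ≤ ((ζ : ArithmeticFunction R) ^ a) n + (ζ : ArithmeticFunction R) n := by
          rw [natCoe_apply, zeta_apply, if_neg (by omega)]
          push_cast
          gcongr
      _ ≤ ((ζ : ArithmeticFunction R) ^ (a + 1)) n := by
          rw [pow_succ]
          exact add_le_mul_apply (pow_apply_nonneg natCoe_zeta_apply_nonneg a)
            natCoe_zeta_apply_nonneg isMultiplicative_zeta.natCast.pow.map_one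
            isMultiplicative_zeta.natCast.map_one hn.ne'

theorem sum_Ioc_mul_le (hf : ∀ n, 0 ≤ f n) (hg : ∀ n, 0 ≤ g n) (N : ℕ) :
    ∑ n ∈ Ioc 0 N, (f * g) n ≤ (∑ n ∈ Ioc 0 N, f n) * ∑ n ∈ Ioc 0 N, g n := by
  rw [sum_Ioc_mul_eq_sum_prod_filter, sum_mul_sum, ← sum_product']
  exact sum_le_sum_of_subset_of_nonneg (filter_subset _ _)
    fun x _ _ ↦ mul_nonneg (hf x.1) (hg x.2)

end OrderedSemiring

theorem mul_pdiv_id {K : Type*} [Field K] (f g : ArithmeticFunction K) :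
    (f * g).pdiv ↑ArithmeticFunction.id =
      f.pdiv ↑ArithmeticFunction.id * g.pdiv ↑ArithmeticFunction.id := by
  ext n
  simp only [pdiv_apply, mul_apply, sum_div, natCoe_apply, id_apply]
  refine sum_congr rfl fun x hx ↦ ?_
  rw [← (Nat.mem_divisorsAntidiagonal.1 hx).1, Nat.cast_mul, mul_div_mul_comm]

section LinearOrderedField

variable {K : Type*} [Field K] [LinearOrder K] [IsStrictOrderedRing K] {f g : ArithmeticFunction K}

theorem sum_Icc_mul_div_le (hf : ∀ n, 0 ≤ f n) (hg : ∀ n, 0 ≤ g n) (N : ℕ) :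
    ∑ n ∈ Icc 1 N, (f * g) n / n ≤ (∑ n ∈ Icc 1 N, f n / n) * ∑ n ∈ Icc 1 N, g n / n := by
  have h := sum_Ioc_mul_le (f := f.pdiv ↑ArithmeticFunction.id)
    (g := g.pdiv ↑ArithmeticFunction.id)
    (fun n ↦ div_nonneg (hf n) (by simp)) (fun n ↦ div_nonneg (hg n) (by simp)) N
  simpa [← mul_pdiv_id, ← Icc_add_one_left_eq_Ioc] using h

theorem sum_Icc_pow_div_le (hf : ∀ n, 0 ≤ f n) (a N : ℕ) :
    ∑ n ∈ Icc 1 N, (f ^ a) n / n ≤ (∑ n ∈ Icc 1 N, f n / n) ^ a := by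
  induction a with
  | zero =>
    simp only [pow_zero, one_apply, ite_div, Nat.cast_one, div_one, zero_div, sum_ite_eq']
    split_ifs <;> simp
  | succ a ih =>
    rw [pow_succ, pow_succ]
    exact (sum_Icc_mul_div_le (pow_apply_nonneg hf a) hf N).trans <|
      mul_le_mul_of_nonneg_right ih (sum_nonneg fun n _ ↦ div_nonneg (hf n) (by simp))

end LinearOrderedField

theorem sum_Icc_zeta_pow_div_le_harmonic_pow (a N : ℕ) :
    ∑ n ∈ Icc 1 N, ((ζ : ArithmeticFunction ℝ) ^ a) n / n ≤ (harmonic N : ℝ) ^ a := by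
  refine (sum_Icc_pow_div_le natCoe_zeta_apply_nonneg a N).trans_eq ?_
  rw [harmonic_eq_sum_Icc]
  push_cast
  refine congrArg (· ^ a) (sum_congr rfl fun n hn ↦ ?_)
  rw [natCoe_apply, zeta_apply, if_neg (by simp at hn; omega)]
  simp

theorem prodPrimeFactors_apply_nonneg {c : ℕ → ℝ} (hc : ∀ p, p.Prime → 0 ≤ c p) (n : ℕ) :
    0 ≤ prodPrimeFactors c n := by
  rcases eq_or_ne n 0 with rfl | hn
  · simp
  · rw [prodPrimeFactors_apply hn]
    exact prod_nonneg fun p hp ↦ hc p (Nat.prime_of_mem_primeFactors hp)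

theorem prodPrimeFactors_apply_prime_pow {R : Type*} [CommMonoidWithZero R] (c : ℕ → R)
    {p v : ℕ} (hp : p.Prime) (hv : v ≠ 0) : prodPrimeFactors c (p ^ v) = c p := by
  rw [prodPrimeFactors_apply (pow_ne_zero _ hp.ne_zero), Nat.primeFactors_prime_pow hv hp,
    prod_singleton]

theorem hasSum_prodPrimeFactors_div_prime_pow (c : ℕ → ℝ) {p : ℕ} (hp : p.Prime) :
    HasSum (fun e ↦ prodPrimeFactors c (p ^ e) / ↑(p ^ e)) (1 + c p / (p - 1)) := by
  have hp₁ : (1 : ℝ) < p := by exact_mod_cast hp.one_lt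
  have hterm : (fun e ↦ prodPrimeFactors c (p ^ (e + 1)) / ↑(p ^ (e + 1))) =
      fun e ↦ c p / p * (p : ℝ)⁻¹ ^ e := by
    ext e
    rw [prodPrimeFactors_apply_prime_pow c hp e.succ_ne_zero, Nat.cast_pow, pow_succ, inv_pow]
    field_simp
  have hvalue : 1 + c p / (p - 1) - ∑ e ∈ range 1, prodPrimeFactors c (p ^ e) / ↑(p ^ e) =
      c p / p * (1 - (p : ℝ)⁻¹)⁻¹ := by
    have : (p : ℝ) - 1 ≠ 0 := by linarith
    simp only [range_one, sum_singleton, pow_zero, (IsMultiplicative.prodPrimeFactors c).map_one,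
      Nat.cast_one, div_one, add_sub_cancel_left]
    field_simp
  rw [← hasSum_nat_add_iff' 1, hterm, hvalue]
  exact (hasSum_geometric_of_lt_one (by positivity) ((inv_lt_one₀ (by positivity)).2 hp₁)).mul_left
    _

theorem sum_Icc_le_prod_primesBelow_tsum {f : ArithmeticFunction ℝ} (hf : f.IsMultiplicative)
    (hf₀ : ∀ n, 0 ≤ f n) (hsum : ∀ p, p.Prime → Summable fun e ↦ f (p ^ e)) (N : ℕ) :
    ∑ n ∈ Icc 1 N, f n ≤ ∏ p ∈ (N + 1).primesBelow, ∑' e, f (p ^ e) := by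
  obtain ⟨-, hasSum⟩ := EulerProduct.summable_and_hasSum_smoothNumbers_prod_primesBelow_tsum
    hf.map_one hf.map_mul_of_coprime
    (fun hp ↦ by simpa only [Real.norm_of_nonneg (hf₀ _)] using hsum _ hp) (N + 1)
  have hsmooth : ∀ n ∈ Icc 1 N, n ∈ (N + 1).smoothNumbers := fun n hn ↦
    Nat.mem_smoothNumbers_of_lt (mem_Icc.1 hn).1 (Nat.lt_succ_of_le (mem_Icc.1 hn).2)
  rw [← sum_subtype_of_mem f hsmooth]
  exact sum_le_hasSum _ (fun n _ ↦ hf₀ n) hasSum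

theorem sum_Icc_prodPrimeFactors_div_le_exp {c : ℕ → ℝ} (hc : ∀ p, p.Prime → 0 ≤ c p) (N : ℕ) :
    ∑ n ∈ Icc 1 N, prodPrimeFactors c n / n ≤
      Real.exp (∑ p ∈ (N + 1).primesBelow, c p / (p - 1)) := by
  have hf := (IsMultiplicative.prodPrimeFactors c).pdiv isMultiplicative_id.natCast (R := ℝ)
  have h := sum_Icc_le_prod_primesBelow_tsum hf
    (fun n ↦ div_nonneg (prodPrimeFactors_apply_nonneg hc n) (by simp))
    (fun p hp ↦ by simpa using (hasSum_prodPrimeFactors_div_prime_pow c hp).summable) N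
  simp only [pdiv_apply, natCoe_apply, id_apply] at h
  refine h.trans ?_
  rw [Real.exp_sum]
  refine prod_le_prod (fun p hp ↦ ?_) fun p hp ↦ ?_
  all_goals
    have hp := Nat.prime_of_mem_primesBelow hp
    rw [(hasSum_prodPrimeFactors_div_prime_pow c hp).tsum_eq]
  · have hp₁ : (1 : ℝ) < p := by exact_mod_cast hp.one_lt
    have : 0 ≤ c p / (p - 1) := div_nonneg (hc p hp) (by linarith)
    linarith
  · rw [add_comm]
    exact Real.add_one_le_exp _

theorem le_apply_of_le_on_prime_powers {b : ℕ → ℝ} (hb₀ : ∀ n, 0 ≤ b n) (hb₁ : b 1 = 1)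
    (hb : ∀ m n, m.Coprime n → b (m * n) = b m * b n) {f : ArithmeticFunction ℝ}
    (hf : f.IsMultiplicative) (hle : ∀ p v, p.Prime → v ≠ 0 → b (p ^ v) ≤ f (p ^ v))
    {n : ℕ} (hn : n ≠ 0) : b n ≤ f n := by
  rw [Nat.multiplicative_factorization b hb hb₁ hn,
    IsMultiplicative.multiplicative_factorization f hf hn]
  refine prod_le_prod (fun _ _ ↦ hb₀ _) fun p hp ↦ ?_
  exact hle p _ (Nat.prime_of_mem_primeFactors (Nat.support_factorization n ▸ hp))
    (Finsupp.mem_support_iff.1 hp)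

theorem le_prodPrimeFactors_mul_zeta_pow_apply {b : ℕ → ℝ} (hb₀ : ∀ n, 0 ≤ b n) (hb₁ : b 1 = 1)
    (hb : ∀ m n, m.Coprime n → b (m * n) = b m * b n) (a : ℕ) {c : ℕ → ℝ}
    (hc : ∀ p, p.Prime → 0 ≤ c p) (hbc : ∀ p v, p.Prime → v ≠ 0 → b (p ^ v) ≤ a + c p)
    {n : ℕ} (hn : n ≠ 0) : b n ≤ (prodPrimeFactors c * (ζ : ArithmeticFunction ℝ) ^ a) n := by
  refine le_apply_of_le_on_prime_powers hb₀ hb₁ hb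
    ((IsMultiplicative.prodPrimeFactors c).mul isMultiplicative_zeta.natCast.pow)
    (fun p v hp hv ↦ ?_) hn
  have hpv : 1 < p ^ v := Nat.one_lt_pow hv hp.one_lt
  calc b (p ^ v) ≤ c p + a := by linarith [hbc p v hp hv]
    _ ≤ prodPrimeFactors c (p ^ v) + ((ζ : ArithmeticFunction ℝ) ^ a) (p ^ v) := by
        rw [prodPrimeFactors_apply_prime_pow c hp hv]
        gcongr
        exact natCast_le_zeta_pow_apply a hpv
    _ ≤ _ := add_le_mul_apply (prodPrimeFactors_apply_nonneg hc)
        (pow_apply_nonneg natCoe_zeta_apply_nonneg a)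
        (IsMultiplicative.prodPrimeFactors c).map_one isMultiplicative_zeta.natCast.pow.map_one
        hpv.ne'

theorem sum_Icc_div_le_exp_mul_harmonic_pow {b : ℕ → ℝ} (hb₀ : ∀ n, 0 ≤ b n) (hb₁ : b 1 = 1)
    (hb : ∀ m n, m.Coprime n → b (m * n) = b m * b n) (a : ℕ) {c : ℕ → ℝ}
    (hc : ∀ p, p.Prime → 0 ≤ c p) (hbc : ∀ p v, p.Prime → v ≠ 0 → b (p ^ v) ≤ a + c p)
    (N : ℕ) :
    ∑ n ∈ Icc 1 N, b n / n ≤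
      Real.exp (∑ p ∈ (N + 1).primesBelow, c p / (p - 1)) * (harmonic N : ℝ) ^ a :=
  calc ∑ n ∈ Icc 1 N, b n / n
      ≤ ∑ n ∈ Icc 1 N, (prodPrimeFactors c * (ζ : ArithmeticFunction ℝ) ^ a) n / n :=
        sum_le_sum fun n hn ↦ div_le_div_of_nonneg_right
          (le_prodPrimeFactors_mul_zeta_pow_apply hb₀ hb₁ hb a hc hbc (by simp at hn; omega))
          n.cast_nonneg
    _ ≤ (∑ n ∈ Icc 1 N, prodPrimeFactors c n / n) *
          ∑ n ∈ Icc 1 N, ((ζ : ArithmeticFunction ℝ) ^ a) n / n :=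
        sum_Icc_mul_div_le (prodPrimeFactors_apply_nonneg hc)
          (pow_apply_nonneg natCoe_zeta_apply_nonneg a) N
    _ ≤ _ :=
        mul_le_mul (sum_Icc_prodPrimeFactors_div_le_exp hc N)
          (sum_Icc_zeta_pow_div_le_harmonic_pow a N)
          (sum_nonneg fun n _ ↦ div_nonneg (pow_apply_nonneg natCoe_zeta_apply_nonneg a n)
            n.cast_nonneg)
          (Real.exp_pos _).le

end ArithmeticFunction

theorem one_add_rpow_sub_one_le {x C : ℝ} (hx₀ : 0 ≤ x) (hx₁ : x ≤ 1) (hC : 0 ≤ C) :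
    (1 + x) ^ C - 1 ≤ (Real.exp C - 1) * x := by
  have hpow : (1 + x) ^ C ≤ Real.exp (x * C) := by
    rw [Real.exp_mul]
    exact Real.rpow_le_rpow (by linarith) (by linarith [Real.add_one_le_exp x]) hC
  have hchord : Real.exp (x * C) ≤ (1 - x) + x * Real.exp C := by
    have := convexOn_exp.2 (Set.mem_univ 0) (Set.mem_univ C) (by linarith : 0 ≤ 1 - x) hx₀
      (by ring)
    simpa [mul_comm] using this
  linarith

theorem sum_primesBelow_inv_sub_one_sq_le (N : ℕ) :
    ∑ p ∈ N.primesBelow, ((p : ℝ) - 1)⁻¹ ^ 2 ≤ 2 := by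
  have hinj : Set.InjOn (· - 1 : ℕ → ℕ) (N.primesBelow : Set ℕ) := fun p hp q hq h ↦ by
    have := (Nat.prime_of_mem_primesBelow hp).two_le
    have := (Nat.prime_of_mem_primesBelow hq).two_le
    simp only at h
    omega
  have hsub : N.primesBelow.image (· - 1 : ℕ → ℕ) ⊆ Ioo 0 N := by
    intro n hn
    obtain ⟨p, hp, rfl⟩ := mem_image.1 hn
    have := (Nat.prime_of_mem_primesBelow hp).two_le
    have := Nat.lt_of_mem_primesBelow hp
    simp only [mem_Ioo]
    omega
  calc ∑ p ∈ N.primesBelow, ((p : ℝ) - 1)⁻¹ ^ 2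
      = ∑ n ∈ N.primesBelow.image (· - 1 : ℕ → ℕ), ((n : ℝ) ^ 2)⁻¹ := by
        rw [sum_image hinj]
        refine sum_congr rfl fun p hp ↦ ?_
        rw [Nat.cast_sub (Nat.prime_of_mem_primesBelow hp).one_le, inv_pow, Nat.cast_one]
    _ ≤ ∑ n ∈ Ioo 0 N, ((n : ℝ) ^ 2)⁻¹ :=
        sum_le_sum_of_subset_of_nonneg hsub fun _ _ _ ↦ by positivity
    _ ≤ 2 := by simpa using sum_Ioo_inv_sq_le (α := ℝ) 0 N

theorem sum_primesBelow_one_add_inv_rpow_sub_one_div_le {C : ℝ} (hC : 0 ≤ C) (N : ℕ) :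
    ∑ p ∈ N.primesBelow, ((1 + ((p : ℝ) - 1)⁻¹) ^ C - 1) / (p - 1) ≤ 2 * (Real.exp C - 1) := by
  have hexp : 0 ≤ Real.exp C - 1 := by linarith [Real.add_one_le_exp C]
  calc ∑ p ∈ N.primesBelow, ((1 + ((p : ℝ) - 1)⁻¹) ^ C - 1) / (p - 1)
      ≤ ∑ p ∈ N.primesBelow, (Real.exp C - 1) * ((p : ℝ) - 1)⁻¹ ^ 2 := by
        refine sum_le_sum fun p hp ↦ ?_
        have hp : (2 : ℝ) ≤ p := by exact_mod_cast (Nat.prime_of_mem_primesBelow hp).two_le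
        have hx : 0 ≤ ((p : ℝ) - 1)⁻¹ := inv_nonneg.2 (by linarith)
        rw [div_eq_mul_inv, sq, ← mul_assoc]
        exact mul_le_mul_of_nonneg_right
          (one_add_rpow_sub_one_le hx (inv_le_one_of_one_le₀ (by linarith)) hC) hx
    _ ≤ 2 * (Real.exp C - 1) := by
        rw [← mul_sum]
        nlinarith [sum_primesBelow_inv_sub_one_sq_le N]

theorem harmonic_le_three_mul_log {n : ℕ} (hn : 2 ≤ n) : (harmonic n : ℝ) ≤ 3 * Real.log n := by
  have hlog : Real.log 2 ≤ Real.log n := Real.log_le_log (by norm_num) (by exact_mod_cast hn)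
  linarith [harmonic_le_one_add_log n, Real.log_two_gt_d9]

/-- If `b : ℕ → [0,∞)` is multiplicative and satisfies
`b(p^v) ≤ (k−1)²·(1 + 1/(p−1))^C` at all prime powers, then
`Σ_{q=1}^{Q} b(q)/q ≪_{k,C} (log Q)^{(k−1)²}`. -/
theorem stmt_16 (k : ℕ) (hk : 2 ≤ k) (C : ℝ) (hC : 0 < C) :
    ∃ K > 0, ∀ b : ℕ → ℝ,
      (∀ n, 0 ≤ b n) → b 1 = 1 →
      (∀ m n : ℕ, Nat.Coprime m n → b (m * n) = b m * b n) →
      (∀ p v : ℕ, p.Prime → 1 ≤ v →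
        b (p ^ v) ≤ ((k : ℝ) - 1) ^ 2 * (1 + 1 / ((p : ℝ) - 1)) ^ C) →
      ∀ Q : ℕ, 2 ≤ Q →
        ∑ q ∈ Finset.Icc 1 Q, b q / q ≤ K * Real.log Q ^ ((k - 1) ^ 2 : ℕ) := by
  set a := (k - 1) ^ 2
  have ha : ((k : ℝ) - 1) ^ 2 = a := by push_cast [a, Nat.cast_sub (by omega : 1 ≤ k)]; ring
  refine ⟨Real.exp (2 * a * (Real.exp C - 1)) * 3 ^ a, by positivity,
    fun b hb₀ hb₁ hb hbp Q hQ ↦ ?_⟩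
  set c : ℕ → ℝ := fun p ↦ a * ((1 + ((p : ℝ) - 1)⁻¹) ^ C - 1)
  have hc : ∀ p, p.Prime → 0 ≤ c p := fun p hp ↦
    mul_nonneg a.cast_nonneg <| sub_nonneg.2 <| Real.one_le_rpow (le_add_of_nonneg_right <|
      inv_nonneg.2 <| sub_nonneg.2 <| by exact_mod_cast hp.one_le) hC.le
  have hbc : ∀ p v, p.Prime → v ≠ 0 → b (p ^ v) ≤ a + c p := fun p v hp hv ↦ by
    have := hbp p v hp (Nat.one_le_iff_ne_zero.2 hv)
    rw [ha, one_div] at this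
    linarith
  have hcsum : ∑ p ∈ (Q + 1).primesBelow, c p / (p - 1) ≤ 2 * a * (Real.exp C - 1) := by
    simp only [c, mul_div_assoc, ← mul_sum]
    nlinarith [sum_primesBelow_one_add_inv_rpow_sub_one_div_le hC.le (Q + 1),
      a.cast_nonneg (α := ℝ)]
  calc ∑ q ∈ Icc 1 Q, b q / q
      ≤ Real.exp (∑ p ∈ (Q + 1).primesBelow, c p / (p - 1)) * (harmonic Q : ℝ) ^ a :=
        sum_Icc_div_le_exp_mul_harmonic_pow hb₀ hb₁ hb a hc hbc Q
    _ ≤ Real.exp (2 * a * (Real.exp C - 1)) * (3 * Real.log Q) ^ a := by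
        have hH : (0 : ℝ) ≤ harmonic Q := by exact_mod_cast (harmonic_pos (by omega)).le
        gcongr
        exact harmonic_le_three_mul_log hQ
    _ = _ := by rw [mul_pow]; ring
end

section
/- Let h ∈ ℤ[x₁,...,x_ℓ] be of degree k ≥ 1, and fix a prime p with a chosen root z_p ∈ ℤ_p^ℓ of h of multiplicity m_p. For d ∈ ℕ divisible by p, define the auxiliary polynomial h_d(x) = h(r_d + d·x)/λ(d), where r_d ≡ z_p mod p^{ord_p(d)} and λ(d) is completely multiplicative with λ(p) = p^{m_p}. Then for every i > m_p, the degree-i homogeneous part of h_d vanishes identically modulo p, and for i = m_p, the p-adic valuation of the coefficients of the degree-m_p part of h_d equals the p-adic valuation of the corresponding Taylor coefficients ∂^I h(r_d)/I! with |I| = m_p, multiplied by the unit d^{m_p}/λ(d) mod p. -/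
open MvPolynomial

lemma scaleCoeff {R : Type*} [CommRing R] {σ : Type*} (c : R) (q : MvPolynomial σ R)
    (I : σ →₀ ℕ) :
    coeff I (aeval (fun i => C c * X i) q) = c ^ (I.sum fun _ n => n) * coeff I q := by
  classical
  induction q using MvPolynomial.induction_on' with
  | monomial J a =>
      have e1 : (aeval fun i => C c * X i) (monomial J a)
          = monomial J (a * c ^ (J.sum fun _ n => n)) := by
        rw [aeval_monomial, monomial_eq, Finsupp.prod, Finsupp.prod]
        simp only [mul_pow]
        rw [Finset.prod_mul_distrib, Finset.prod_pow_eq_pow_sum, Finsupp.sum,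
          algebraMap_eq, ← mul_assoc, ← C_pow, ← C_mul]
      rw [e1, coeff_monomial, coeff_monomial]
      split_ifs with hJ
      · subst hJ; ring
      · ring
  | add f g hf hg =>
      rw [map_add, coeff_add, coeff_add, hf, hg, mul_add]


/-- Let `z` be a root of `h` of multiplicity `m` over `ℤ_p`, `p ∣ d`, `j = ord_p d`,
`r ≡ z (mod p^j)`, and `λ(d) = p^{mj}·u` with `p ∤ u`.  For the auxiliary polynomial
`h_d(x) = h(r + d·x)/λ(d)`: every homogeneous part of `h_d` of degree `> m` vanishes
identically modulo `p`, and for each multi-index `I` with `|I| = m` the `p`-adic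
valuation of the `x^I`-coefficient of `h_d` (measured by the `p`-adic norm) equals that
of the Taylor coefficient `∂^I h(r)/I!`, i.e. of the `x^I`-coefficient of `h(r + x)`. -/
theorem stmt_17 (p : ℕ) [Fact p.Prime] (ℓ k m : ℕ) (hℓ : 1 ≤ ℓ) (hk : 1 ≤ k) (hm : 1 ≤ m)
    (h : MvPolynomial (Fin ℓ) ℤ_[p]) (hdeg : h.totalDegree = k)
    (z : Fin ℓ → ℤ_[p])
    (Sz : MvPolynomial (Fin ℓ) ℤ_[p])
    (hSz : Sz = aeval (fun i => C (z i) + X i) h)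
    (hlow : ∀ I : Fin ℓ →₀ ℕ, (I.sum fun _ n => n) < m → coeff I Sz = 0)
    (hmult : ∃ I : Fin ℓ →₀ ℕ, (I.sum fun _ n => n) = m ∧ coeff I Sz ≠ 0)
    (d : ℕ) (hd : 0 < d) (hpd : p ∣ d) (j : ℕ) (hj : j = d.factorization p)
    (r : Fin ℓ → ℤ_[p]) (hr : ∀ i, (p : ℤ_[p]) ^ j ∣ (r i - z i))
    (u lamd : ℤ) (hu : ¬ (p : ℤ) ∣ u) (hlam : lamd = (p : ℤ) ^ (m * j) * u)
    (hd_poly Sr : MvPolynomial (Fin ℓ) ℤ_[p])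
    (hdef : C ((lamd : ℤ_[p])) * hd_poly
      = aeval (fun i => C (r i) + C ((d : ℤ_[p])) * X i) h)
    (hSr : Sr = aeval (fun i => C (r i) + X i) h) :
    (∀ I : Fin ℓ →₀ ℕ, m < (I.sum fun _ n => n) → (p : ℤ_[p]) ∣ coeff I hd_poly) ∧
    (∀ I : Fin ℓ →₀ ℕ, (I.sum fun _ n => n) = m → ‖coeff I hd_poly‖ = ‖coeff I Sr‖) := by
  have hp := (Fact.out : p.Prime)
  have hcomp : aeval (fun i => C (r i) + C ((d : ℤ_[p])) * X i) h
      = aeval (fun i => C ((d : ℤ_[p])) * X i) Sr := by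
    rw [hSr, ← AlgHom.comp_apply, comp_aeval]
    simp [algebraMap_eq]
  have key : ∀ I : Fin ℓ →₀ ℕ, (lamd : ℤ_[p]) * coeff I hd_poly
      = (d : ℤ_[p]) ^ (I.sum fun _ n => n) * coeff I Sr := by
    intro I
    have := congrArg (coeff I) hdef
    rwa [coeff_C_mul, hcomp, scaleCoeff] at this
  have hj1 : 1 ≤ j := by
    rw [hj]
    exact Nat.Prime.factorization_pos_of_dvd hp hd.ne' hpd
  have hpj : (p : ℤ_[p]) ^ j ∣ (d : ℤ_[p]) := by
    have h1 : (p ^ j : ℕ) ∣ d := by rw [hj]; exact Nat.ordProj_dvd d p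
    exact_mod_cast (Nat.cast_dvd_cast h1 : ((p ^ j : ℕ) : ℤ_[p]) ∣ (d : ℤ_[p]))
  have hune : ‖((u : ℤ) : ℤ_[p])‖ = 1 := by
    refine le_antisymm (PadicInt.norm_le_one _) (not_lt.1 ?_)
    rw [PadicInt.norm_int_lt_one_iff_dvd]
    exact hu
  have hpne : (p : ℤ_[p]) ≠ 0 := by exact_mod_cast Nat.cast_ne_zero.2 hp.ne_zero
  constructor
  · intro I hI
    set n := (I.sum fun _ n => n) with hn
    have h1 : (p : ℤ_[p]) ^ (m * j) * (((u : ℤ_[p])) * coeff I hd_poly)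
        = (d : ℤ_[p]) ^ n * coeff I Sr := by
      rw [← mul_assoc, ← key I, hlam]
      push_cast
      ring
    have hle : m * j + 1 ≤ j * n := by
      calc m * j + 1 ≤ j * m + j := by rw [mul_comm m j]; omega
        _ = j * (m + 1) := by ring
        _ ≤ j * n := Nat.mul_le_mul_left j hI
    have h2 : (p : ℤ_[p]) ^ (m * j + 1) ∣ (p : ℤ_[p]) ^ (m * j) * (((u : ℤ_[p])) * coeff I hd_poly) := by
      rw [h1]
      refine dvd_mul_of_dvd_left ?_ _
      calc (p : ℤ_[p]) ^ (m * j + 1) ∣ (p : ℤ_[p]) ^ (j * n) := pow_dvd_pow _ hle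
        _ = ((p : ℤ_[p]) ^ j) ^ n := by rw [pow_mul]
        _ ∣ (d : ℤ_[p]) ^ n := pow_dvd_pow_of_dvd hpj n
    rw [pow_succ, mul_dvd_mul_iff_left (pow_ne_zero (m * j) hpne)] at h2
    have hUnit : IsUnit ((u : ℤ) : ℤ_[p]) := PadicInt.isUnit_iff.2 hune
    exact hUnit.dvd_mul_left.1 h2
  · intro I hIm
    have hnorm := congrArg (‖·‖) (key I)
    simp only [norm_mul, norm_pow, hIm] at hnorm
    have hdfac : (d : ℤ_[p]) = (p : ℤ_[p]) ^ j * ((d / p ^ j : ℕ) : ℤ_[p]) := by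
      have h1 : d = p ^ j * (d / p ^ j) := by
        rw [hj]; exact (Nat.ordProj_mul_ordCompl_eq_self d p).symm
      exact_mod_cast congrArg (Nat.cast : ℕ → ℤ_[p]) h1
    have hce : ‖((d / p ^ j : ℕ) : ℤ_[p])‖ = 1 := by
      refine le_antisymm (PadicInt.norm_le_one _) (not_lt.1 ?_)
      have : ((d / p ^ j : ℕ) : ℤ_[p]) = (((d / p ^ j : ℕ) : ℤ) : ℤ_[p]) := (Int.cast_natCast _).symm
      rw [this, PadicInt.norm_int_lt_one_iff_dvd]
      rw [Int.natCast_dvd_natCast, hj]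
      exact Nat.not_dvd_ordCompl hp hd.ne'
    have hld : ‖((lamd : ℤ) : ℤ_[p])‖ = ‖(d : ℤ_[p])‖ ^ m := by
      rw [hlam]
      push_cast
      rw [norm_mul, norm_pow, hune, mul_one, hdfac, norm_mul,
        norm_pow, hce, mul_one, ← pow_mul, mul_comm j m]
    have hldne : ‖((lamd : ℤ) : ℤ_[p])‖ ≠ 0 := by
      rw [hld]
      refine pow_ne_zero m (norm_ne_zero_iff.2 ?_)
      exact_mod_cast Nat.cast_ne_zero.2 hd.ne'
    rw [hld] at hnorm
    exact mul_left_cancel₀ (hld ▸ hldne) hnorm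
end
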